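/- Let R be a graded radically principal commutative G-graded ring and S a multiplicative subset of homogeneous elements of R. Then the localization S⁻¹R is a graded radically principal ring. -/

import Mathlib

open DirectSum

variable {G A : Type*} [AddGroup G] [DecidableEq G] [CommRing A]

def gradedRadical (𝒜 : G → AddSubgroup A) [GradedRing 𝒜] (I : Ideal A) : Set A :=
  {x | ∀ g : G, ∃ n : ℕ, ((DirectSum.decompose 𝒜 x g : A)) ^ n ∈ I}

def IsGradedRadicallyPrincipal (𝒜 : G → AddSubgroup A) [GradedRing 𝒜] (I : Ideal A) : Prop :=
  ∃ c : A, SetLike.IsHomogeneousElem 𝒜 c ∧ gradedRadical 𝒜 I = gradedRadical 𝒜 (Ideal.span {c})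

def GradedRadicallyPrincipalRing (𝒜 : G → AddSubgroup A) [GradedRing 𝒜] : Prop :=
  ∀ I : Ideal A, I.IsHomogeneous 𝒜 → IsGradedRadicallyPrincipal 𝒜 I

def IsGradedPrime (𝒜 : G → AddSubgroup A) [GradedRing 𝒜] (P : Ideal A) : Prop :=
  P ≠ ⊤ ∧ P.IsHomogeneous 𝒜 ∧
    ∀ ⦃x y : A⦄, SetLike.IsHomogeneousElem 𝒜 x → SetLike.IsHomogeneousElem 𝒜 y → x * y ∈ P →
      x ∈ P ∨ y ∈ P

/-! A graded radical is determined by the homogeneous elements of the ordinary radical, and every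
homogeneous element of `S⁻¹R` is a unit multiple of the image `f a` of a homogeneous `a ∈ R`. For an
ideal `J` of `S⁻¹R`, let `I` be the homogeneous core of `f⁻¹(J)`: a homogeneous `a` satisfies
`f a ∈ √J` iff `a ∈ √I`. Choosing `c` with `Grad(I) = Grad(⟨c⟩)` gives `f c ∈ √J`, and then `√J` and
`√⟨f c⟩` contain the same images of homogeneous elements. -/

open SetLike

section GradedRadical

variable {𝒜 : G → AddSubgroup A} [GradedRing 𝒜] {I J : Ideal A}

theorem mem_gradedRadical_iff {x : A} :
    x ∈ gradedRadical 𝒜 I ↔ ∀ g, (decompose 𝒜 x g : A) ∈ I.radical :=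
  Iff.rfl

theorem mem_gradedRadical_iff_mem_radical {a : A} {h : G} (ha : a ∈ 𝒜 h) :
    a ∈ gradedRadical 𝒜 I ↔ a ∈ I.radical := by
  rw [mem_gradedRadical_iff]
  refine ⟨fun hrad => decompose_of_mem_same 𝒜 ha ▸ hrad h, fun hrad g => ?_⟩
  by_cases hg : h = g
  · subst hg
    rwa [decompose_of_mem_same 𝒜 ha]
  · rw [decompose_of_mem_ne 𝒜 ha hg]
    exact zero_mem _

theorem gradedRadical_eq_iff :
    gradedRadical 𝒜 I = gradedRadical 𝒜 J ↔
      ∀ a, IsHomogeneousElem 𝒜 a → (a ∈ I.radical ↔ a ∈ J.radical) := by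
  refine ⟨fun hIJ a ⟨h, ha⟩ => ?_, fun hIJ => Set.ext fun x => ?_⟩
  · rw [← mem_gradedRadical_iff_mem_radical ha, ← mem_gradedRadical_iff_mem_radical ha, hIJ]
  · simp only [mem_gradedRadical_iff]
    exact forall_congr' fun g => hIJ _ ⟨g, (decompose 𝒜 x g).2⟩

theorem mem_radical_homogeneousCore_iff {a : A} (ha : IsHomogeneousElem 𝒜 a) :
    a ∈ (I.homogeneousCore 𝒜).toIdeal.radical ↔ a ∈ I.radical := by
  refine ⟨fun hrad => Ideal.radical_mono (I.toIdeal_homogeneousCore_le 𝒜) hrad,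
    fun ⟨n, hn⟩ => ⟨n, ?_⟩⟩
  obtain ⟨h, ha⟩ := ha
  exact Ideal.mem_homogeneousCore_of_homogeneous_of_mem ⟨n • h, pow_mem_graded n ha⟩ hn

end GradedRadical

section Localization

def IsLocalizationGrading {S : Submonoid A} (𝒜 : G → AddSubgroup A)
    (ℬ : G → AddSubgroup (Localization S)) : Prop :=
  ∀ g, (ℬ g : Set (Localization S)) =
    {x | ∃ (h : G) (a : A) (s : S), a ∈ 𝒜 h ∧ (s : A) ∈ 𝒜 (h - g) ∧ x = Localization.mk a s}

variable {𝒜 : G → AddSubgroup A} [GradedRing 𝒜] {S : Submonoid A}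

theorem IsLocalizationGrading.algebraMap_mem {ℬ : G → AddSubgroup (Localization S)}
    (hℬ : IsLocalizationGrading 𝒜 ℬ) {a : A} {g : G} (ha : a ∈ 𝒜 g) :
    algebraMap A (Localization S) a ∈ ℬ g := by
  have : algebraMap A (Localization S) a ∈ (ℬ g : Set (Localization S)) := by
    rw [hℬ g]
    exact ⟨g, a, 1, ha, by simp [one_mem_graded 𝒜], (Localization.mk_one_eq_algebraMap a).symm⟩
  exact this

variable {J : Ideal (Localization S)} {c : A}

theorem algebraMap_mem_radical_iff
    (hc : gradedRadical 𝒜 ((J.comap (algebraMap A (Localization S))).homogeneousCore 𝒜).toIdeal =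
      gradedRadical 𝒜 (Ideal.span {c}))
    {a : A} (ha : IsHomogeneousElem 𝒜 a) :
    algebraMap A (Localization S) a ∈ J.radical ↔ a ∈ (Ideal.span {c}).radical := by
  rw [← Ideal.mem_comap, Ideal.comap_radical, ← mem_radical_homogeneousCore_iff ha,
    gradedRadical_eq_iff.mp hc a ha]

theorem algebraMap_mem_radical_iff_mem_radical_span (hc_hom : IsHomogeneousElem 𝒜 c)
    (hc : gradedRadical 𝒜 ((J.comap (algebraMap A (Localization S))).homogeneousCore 𝒜).toIdeal =
      gradedRadical 𝒜 (Ideal.span {c}))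
    {a : A} (ha : IsHomogeneousElem 𝒜 a) :
    algebraMap A (Localization S) a ∈ J.radical ↔
      algebraMap A (Localization S) a ∈ (Ideal.span {algebraMap A (Localization S) c}).radical := by
  set f := algebraMap A (Localization S)
  have hfc : f c ∈ J.radical :=
    (algebraMap_mem_radical_iff hc hc_hom).mpr (Ideal.le_radical (Ideal.mem_span_singleton_self c))
  have hspan : Ideal.span {f c} = (Ideal.span {c}).map f := by
    rw [Ideal.map_span, Set.image_singleton]
  rw [algebraMap_mem_radical_iff hc ha]
  constructor
  · intro hrad
    rw [hspan]
    exact Ideal.map_radical_le f (Ideal.mem_map_of_mem f hrad)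
  · intro hrad
    have hle : (Ideal.span {f c}).radical ≤ J.radical := by
      rwa [Ideal.radical_le_radical_iff, Ideal.span_singleton_le_iff_mem]
    exact (algebraMap_mem_radical_iff hc ha).mp (hle hrad)

theorem IsLocalizationGrading.gradedRadical_eq {ℬ : G → AddSubgroup (Localization S)}
    [GradedRing ℬ] (hℬ : IsLocalizationGrading 𝒜 ℬ) (hc_hom : IsHomogeneousElem 𝒜 c)
    (hc : gradedRadical 𝒜 ((J.comap (algebraMap A (Localization S))).homogeneousCore 𝒜).toIdeal =
      gradedRadical 𝒜 (Ideal.span {c})) :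
    gradedRadical ℬ J = gradedRadical ℬ (Ideal.span {algebraMap A (Localization S) c}) := by
  refine gradedRadical_eq_iff.mpr fun y ⟨g, hy⟩ => ?_
  have hy : y ∈ (ℬ g : Set (Localization S)) := hy
  rw [hℬ g] at hy
  obtain ⟨h, a, s, ha, -, rfl⟩ := hy
  rw [Localization.mk_eq_mk', IsLocalization.mk'_mem_iff, IsLocalization.mk'_mem_iff]
  exact algebraMap_mem_radical_iff_mem_radical_span hc_hom hc ⟨h, ha⟩

end Localization

theorem stmt_9_general (𝒜 : G → AddSubgroup A) [GradedRing 𝒜]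
    (hR : GradedRadicallyPrincipalRing 𝒜) (S : Submonoid A)
    (ℬ : G → AddSubgroup (Localization S)) [GradedRing ℬ]
    (hℬ : ∀ g, (ℬ g : Set (Localization S)) =
      {x | ∃ (h : G) (a : A) (s : S), a ∈ 𝒜 h ∧ (s : A) ∈ 𝒜 (h - g) ∧
        x = Localization.mk a s}) :
    GradedRadicallyPrincipalRing ℬ := by
  intro J _
  obtain ⟨c, ⟨k, hck⟩, hc⟩ :=
    hR _ ((J.comap (algebraMap A (Localization S))).homogeneousCore 𝒜).isHomogeneous
  have hℬ : IsLocalizationGrading 𝒜 ℬ := hℬ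
  exact ⟨algebraMap A (Localization S) c, ⟨k, hℬ.algebraMap_mem hck⟩,
    hℬ.gradedRadical_eq ⟨k, hck⟩ hc⟩

theorem stmt_9 (𝒜 : G → AddSubgroup A) [GradedRing 𝒜]
    (hR : GradedRadicallyPrincipalRing 𝒜) (S : Submonoid A)
    (hS : ∀ s ∈ S, SetLike.IsHomogeneousElem 𝒜 s)
    (ℬ : G → AddSubgroup (Localization S)) [GradedRing ℬ]
    (hℬ : ∀ g, (ℬ g : Set (Localization S)) =
      {x | ∃ (h : G) (a : A) (s : S), a ∈ 𝒜 h ∧ (s : A) ∈ 𝒜 (h - g) ∧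
        x = Localization.mk a s}) :
    GradedRadicallyPrincipalRing ℬ :=
  stmt_9_general 𝒜 hR S ℬ hℬ
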